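/- The type sequence of the lattice α-helix of length N ≥ 5 is the 4-periodic word →1, →2, ←2, ←1, →1, →2, ←2, ←1, … (the i-th window, i = 3,…,N−2, has the (i−3 mod 4)-th of these types), and the type sequence of the lattice β-strand of length N ≥ 5 is the 2-periodic word →1, ←1, →1, ←1, …. -/
import Mathlib


/-- Points of the cubic lattice `ℤ³`. -/
abbrev P3 : Type := Fin 3 → ℤ

def e1 : P3 := ![1, 0, 0]
def e2 : P3 := ![0, 1, 0]
def e3 : P3 := ![0, 0, 1]

/-- Squared Euclidean norm of an integer vector; it equals `1` iff the
Euclidean norm equals `1`. -/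
def sqNorm (v : P3) : ℤ := ∑ k, (v k) ^ 2

/-- A conformation of length `N`: an injective map on `{1, …, N}` whose
consecutive steps have Euclidean length one. -/
def IsConformation (N : ℕ) (Γ : ℕ → P3) : Prop :=
  Set.InjOn Γ (Set.Icc 1 N) ∧ ∀ i, 1 ≤ i → i < N → sqNorm (Γ (i + 1) - Γ i) = 1

/-- A lattice rotation: an orthogonal integer matrix of determinant one
(equivalently, a linear isometry of `ℝ³` mapping `ℤ³` onto `ℤ³` with
determinant one). -/
def IsLatticeRotation (R : Matrix (Fin 3) (Fin 3) ℤ) : Prop :=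
  R.transpose * R = 1 ∧ R.det = 1

/-- Equivalence of length-5 conformations: `Δ' k = R (Δ k) + t` for a lattice
rotation `R` and translation `t ∈ ℤ³`. -/
def Equiv5 (Δ Δ' : Fin 5 → P3) : Prop :=
  ∃ (R : Matrix (Fin 3) (Fin 3) ℤ) (t : P3),
    IsLatticeRotation R ∧ ∀ k, Δ' k = R.mulVec (Δ k) + t

/-- Reversal of a length-5 conformation (`k ↦ Δ (6 - k)` in 1-based indexing). -/
def rev5 (Δ : Fin 5 → P3) : Fin 5 → P3 := fun k => Δ k.rev

/-- Conformation 1: vertices (0,0,0), (1,0,0), (1,1,0), (0,1,0), (0,1,1). -/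
def conf1 : Fin 5 → P3 := ![![0, 0, 0], ![1, 0, 0], ![1, 1, 0], ![0, 1, 0], ![0, 1, 1]]

/-- Conformation 2: vertices (0,0,0), (0,1,0), (−1,1,0), (−1,1,1), (−1,0,1). -/
def conf2 : Fin 5 → P3 := ![![0, 0, 0], ![0, 1, 0], ![-1, 1, 0], ![-1, 1, 1], ![-1, 0, 1]]

/-- The `i`-th window of `Γ`: the 5-tuple `(Γ(i-2), …, Γ(i+2))`. -/
def window (Γ : ℕ → P3) (i : ℕ) : Fin 5 → P3 := fun k => Γ (i - 2 + (k : ℕ))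

/-- `Φ(Δ) = 1`: the 5-tuple `Δ` or its reversal is equivalent to
conformation 1 or to conformation 2. -/
def WindowGood (Δ : Fin 5 → P3) : Prop :=
  Equiv5 Δ conf1 ∨ Equiv5 (rev5 Δ) conf1 ∨ Equiv5 Δ conf2 ∨ Equiv5 (rev5 Δ) conf2

open Classical in
/-- The function `Φ` on length-5 conformations. -/
noncomputable def Phi (Δ : Fin 5 → P3) : ℤ := if WindowGood Δ then 1 else 0

/-- The energy `E₅(Γ) = −Σ_{i=3}^{N−2} Φ(Γ_i)`. -/
noncomputable def E5 (N : ℕ) (Γ : ℕ → P3) : ℤ :=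
  -∑ i ∈ Finset.Icc 3 (N - 2), Phi (window Γ i)

/-- A minimal conformation: a conformation all of whose windows satisfy `Φ = 1`. -/
def IsMinimal (N : ℕ) (Γ : ℕ → P3) : Prop :=
  IsConformation N Γ ∧ ∀ i, 3 ≤ i → i ≤ N - 2 → WindowGood (window Γ i)

/-- The walk starting at the origin (in 1-based indexing) whose steps
cyclically repeat the given list. -/
def cyclicWalk (steps : List P3) : ℕ → P3
  | 0 => 0
  | 1 => 0
  | n + 2 => cyclicWalk steps (n + 1) + steps.getD (n % steps.length) 0

/-- The 16-term step sequence of the lattice α-helix. -/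
def alphaStepList : List P3 :=
  [e1, e2, -e1, e3, -e2, e1, e2, e3, -e1, -e2, e1, e3, e2, -e1, -e2, e3]

/-- The 4-term step sequence of the lattice β-strand. -/
def betaStepList : List P3 := [e1, e2, -e1, e3]

/-- The lattice α-helix (`H(1) = 0`, steps cyclically repeating `alphaStepList`). -/
def alphaHelix : ℕ → P3 := cyclicWalk alphaStepList

/-- The lattice β-strand (`B(1) = 0`, steps cyclically repeating `betaStepList`). -/
def betaStrand : ℕ → P3 := cyclicWalk betaStepList

/-- The four directed types of windows. -/
inductive DType : Type
  | r1  -- →1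
  | l1  -- ←1
  | r2  -- →2
  | l2  -- ←2
deriving DecidableEq

/-- A window `Δ` has directed type `→1` (resp. `→2`) if it is equivalent to
conformation 1 (resp. 2), and `←1` (resp. `←2`) if its reversal is. -/
def HasType (Δ : Fin 5 → P3) : DType → Prop
  | DType.r1 => Equiv5 Δ conf1
  | DType.l1 => Equiv5 (rev5 Δ) conf1
  | DType.r2 => Equiv5 Δ conf2
  | DType.l2 => Equiv5 (rev5 Δ) conf2

/-- The six allowed ordered pairs of directed types of consecutive windows:
(→1,←1), (←1,→1), (→1,→2), (→2,←2), (←2,←1), (←2,→2). -/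
def allowedPairs : List (DType × DType) :=
  [(DType.r1, DType.l1), (DType.l1, DType.r1), (DType.r1, DType.r2),
   (DType.r2, DType.l2), (DType.l2, DType.l1), (DType.l2, DType.r2)]

/-- `w` is the type sequence of `Γ` (a conformation of length `N`):
`w` has length `N − 4` and its `j`-th letter is the directed type of the
window `Γ_{3+j}`, `j = 0, …, N−5`. -/
def HasTypeSeq (N : ℕ) (Γ : ℕ → P3) (w : List DType) : Prop :=
  w.length = N - 4 ∧ ∀ j (h : j < w.length), HasType (window Γ (3 + j)) (w.get ⟨j, h⟩)

/-- The word `α = →1→2←2←1`. -/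
def wordAlpha : List DType := [DType.r1, DType.r2, DType.l2, DType.l1]

/-- The word `β = →1←1`. -/
def wordBeta : List DType := [DType.r1, DType.l1]

/-- `v` is a finite concatenation of copies of the words `α` and `β`. -/
def IsABConcat (v : List DType) : Prop :=
  ∃ L : List (List DType), (∀ u ∈ L, u = wordAlpha ∨ u = wordBeta) ∧ v = L.flatten

/-- A word is admissible if it is a contiguous subword (factor) of some finite
concatenation of copies of `α` and `β`. -/
def Admissible (w : List DType) : Prop := ∃ v, IsABConcat v ∧ w <:+: v

/-- The two kinds of monomers. -/
inductive AB : Type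
  | A
  | B
deriving DecidableEq

/-- The number of occurrences of the letter `c` in the `i`-th 5-tuple
`S(i−2), …, S(i+2)` of the sequence `S`. -/
def countLetter (c : AB) (S : ℕ → AB) (i : ℕ) : ℕ :=
  ((Finset.Icc (i - 2) (i + 2)).filter fun k => S k = c).card

open Classical in
/-- `Φ₁(Δ) = 1` iff `Δ` or its reversal is equivalent to conformation 1. -/
noncomputable def Phi1 (Δ : Fin 5 → P3) : ℝ :=
  if Equiv5 Δ conf1 ∨ Equiv5 (rev5 Δ) conf1 then 1 else 0

open Classical in
/-- `Φ₂(Δ) = 1` iff `Δ` or its reversal is equivalent to conformation 2. -/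
noncomputable def Phi2 (Δ : Fin 5 → P3) : ℝ :=
  if Equiv5 Δ conf2 ∨ Equiv5 (rev5 Δ) conf2 then 1 else 0

/-- The heteropolymer energy
`E₅′(S,Γ) = −Σᵢ [#_B(Sᵢ)(Φ₁(Γᵢ) + ε Φ₂(Γᵢ)) + #_A(Sᵢ)(Φ₂(Γᵢ) + ε Φ₁(Γᵢ))]`. -/
noncomputable def E5' (ε : ℝ) (S : ℕ → AB) (N : ℕ) (Γ : ℕ → P3) : ℝ :=
  -∑ i ∈ Finset.Icc 3 (N - 2),
    ((countLetter AB.B S i : ℝ) * (Phi1 (window Γ i) + ε * Phi2 (window Γ i)) +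
      (countLetter AB.A S i : ℝ) * (Phi2 (window Γ i) + ε * Phi1 (window Γ i)))

/-- The 4-periodic pattern →1, →2, ←2, ←1. -/
def alphaPattern (n : ℕ) : DType :=
  [DType.r1, DType.r2, DType.l2, DType.l1].getD (n % 4) DType.r1

/-- The 2-periodic pattern →1, ←1. -/
def betaPattern (n : ℕ) : DType :=
  [DType.r1, DType.l1].getD (n % 2) DType.r1


/-! ### Auxiliary lemmas for the proof -/

lemma cyclicWalk_succ' (steps : List P3) (n : ℕ) :
    cyclicWalk steps (n+2) = cyclicWalk steps (n+1) + steps.getD (n % steps.length) 0 := rfl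

lemma alpha_period (n : ℕ) : alphaHelix (n+1+16) = alphaHelix (n+1) + ![0,0,4] := by
  induction n with
  | zero => decide
  | succ m ih =>
    rw [show m+1+1+16 = (m+16)+2 from by omega]
    show cyclicWalk alphaStepList ((m+16)+2) = _
    rw [cyclicWalk_succ']
    rw [show (m+16) % alphaStepList.length = m % alphaStepList.length from
      Nat.add_mod_right m 16]
    rw [show m + 16 + 1 = m + 1 + 16 from by omega,
      show cyclicWalk alphaStepList (m+1+16) = alphaHelix (m+1+16) from rfl, ih]
    show _ = cyclicWalk alphaStepList (m+2) + _
    rw [cyclicWalk_succ',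
      show cyclicWalk alphaStepList (m+1) = alphaHelix (m+1) from rfl]
    abel

lemma beta_period (n : ℕ) : betaStrand (n+1+4) = betaStrand (n+1) + ![0,1,1] := by
  induction n with
  | zero => decide
  | succ m ih =>
    rw [show m+1+1+4 = (m+4)+2 from by omega]
    show cyclicWalk betaStepList ((m+4)+2) = _
    rw [cyclicWalk_succ']
    rw [show (m+4) % betaStepList.length = m % betaStepList.length from
      Nat.add_mod_right m 4]
    rw [show m + 4 + 1 = m + 1 + 4 from by omega,
      show cyclicWalk betaStepList (m+1+4) = betaStrand (m+1+4) from rfl, ih]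
    show _ = cyclicWalk betaStepList (m+2) + _
    rw [cyclicWalk_succ',
      show cyclicWalk betaStepList (m+1) = betaStrand (m+1) from rfl]
    abel

lemma Equiv5_translate {Δ c : Fin 5 → P3} (v : P3) (h : Equiv5 Δ c) :
    Equiv5 (fun k => Δ k + v) c := by
  obtain ⟨R, t, hR, he⟩ := h
  refine ⟨R, t - R.mulVec v, hR, fun k => ?_⟩
  rw [he k, Matrix.mulVec_add]
  abel

lemma HasType_translate {Δ : Fin 5 → P3} (v : P3) {T : DType} (h : HasType Δ T) :
    HasType (fun k => Δ k + v) T := by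
  cases T <;> exact Equiv5_translate v h

lemma window_alpha_shift (i : ℕ) (hi : 3 ≤ i) :
    window alphaHelix (i+16) = fun k => window alphaHelix i k + ![0,0,4] := by
  funext k
  show alphaHelix (i + 16 - 2 + k) = alphaHelix (i - 2 + k) + _
  obtain ⟨j, rfl⟩ : ∃ j, i = j + 3 := ⟨i - 3, by omega⟩
  rw [show j + 3 + 16 - 2 + (k:ℕ) = (j + (k:ℕ)) + 1 + 16 from by omega,
    show j + 3 - 2 + (k:ℕ) = (j + (k:ℕ)) + 1 from by omega, alpha_period]

lemma window_beta_shift (i : ℕ) (hi : 3 ≤ i) :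
    window betaStrand (i+4) = fun k => window betaStrand i k + ![0,1,1] := by
  funext k
  show betaStrand (i + 4 - 2 + k) = betaStrand (i - 2 + k) + _
  obtain ⟨j, rfl⟩ : ∃ j, i = j + 3 := ⟨i - 3, by omega⟩
  rw [show j + 3 + 4 - 2 + (k:ℕ) = (j + (k:ℕ)) + 1 + 4 from by omega,
    show j + 3 - 2 + (k:ℕ) = (j + (k:ℕ)) + 1 from by omega, beta_period]

lemma base_alphaHelix_3 : HasType (window alphaHelix 3) DType.r1 :=
  ⟨!![1, 0, 0; 0, 1, 0; 0, 0, 1], ![0, 0, 0], ⟨by decide, by decide⟩, by decide⟩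
lemma base_alphaHelix_4 : HasType (window alphaHelix 4) DType.r2 :=
  ⟨!![1, 0, 0; 0, 1, 0; 0, 0, 1], ![-1, 0, 0], ⟨by decide, by decide⟩, by decide⟩
lemma base_alphaHelix_5 : HasType (window alphaHelix 5) DType.l2 :=
  ⟨!![0, -1, 0; -1, 0, 0; 0, 0, -1], ![0, 1, 1], ⟨by decide, by decide⟩, by decide⟩
lemma base_alphaHelix_6 : HasType (window alphaHelix 6) DType.l1 :=
  ⟨!![0, -1, 0; -1, 0, 0; 0, 0, -1], ![1, 1, 1], ⟨by decide, by decide⟩, by decide⟩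
lemma base_alphaHelix_7 : HasType (window alphaHelix 7) DType.r1 :=
  ⟨!![0, -1, 0; 1, 0, 0; 0, 0, 1], ![1, 0, -1], ⟨by decide, by decide⟩, by decide⟩
lemma base_alphaHelix_8 : HasType (window alphaHelix 8) DType.r2 :=
  ⟨!![0, -1, 0; 1, 0, 0; 0, 0, 1], ![0, 0, -1], ⟨by decide, by decide⟩, by decide⟩
lemma base_alphaHelix_9 : HasType (window alphaHelix 9) DType.l2 :=
  ⟨!![-1, 0, 0; 0, 1, 0; 0, 0, -1], ![0, 0, 2], ⟨by decide, by decide⟩, by decide⟩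
lemma base_alphaHelix_10 : HasType (window alphaHelix 10) DType.l1 :=
  ⟨!![-1, 0, 0; 0, 1, 0; 0, 0, -1], ![1, 0, 2], ⟨by decide, by decide⟩, by decide⟩
lemma base_alphaHelix_11 : HasType (window alphaHelix 11) DType.r1 :=
  ⟨!![-1, 0, 0; 0, -1, 0; 0, 0, 1], ![1, 1, -2], ⟨by decide, by decide⟩, by decide⟩
lemma base_alphaHelix_12 : HasType (window alphaHelix 12) DType.r2 :=
  ⟨!![-1, 0, 0; 0, -1, 0; 0, 0, 1], ![0, 1, -2], ⟨by decide, by decide⟩, by decide⟩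
lemma base_alphaHelix_13 : HasType (window alphaHelix 13) DType.l2 :=
  ⟨!![0, 1, 0; 1, 0, 0; 0, 0, -1], ![-1, 0, 3], ⟨by decide, by decide⟩, by decide⟩
lemma base_alphaHelix_14 : HasType (window alphaHelix 14) DType.l1 :=
  ⟨!![0, 1, 0; 1, 0, 0; 0, 0, -1], ![0, 0, 3], ⟨by decide, by decide⟩, by decide⟩
lemma base_alphaHelix_15 : HasType (window alphaHelix 15) DType.r1 :=
  ⟨!![0, 1, 0; -1, 0, 0; 0, 0, 1], ![0, 1, -3], ⟨by decide, by decide⟩, by decide⟩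
lemma base_alphaHelix_16 : HasType (window alphaHelix 16) DType.r2 :=
  ⟨!![0, 1, 0; -1, 0, 0; 0, 0, 1], ![-1, 1, -3], ⟨by decide, by decide⟩, by decide⟩
lemma base_alphaHelix_17 : HasType (window alphaHelix 17) DType.l2 :=
  ⟨!![1, 0, 0; 0, -1, 0; 0, 0, -1], ![-1, 1, 4], ⟨by decide, by decide⟩, by decide⟩
lemma base_alphaHelix_18 : HasType (window alphaHelix 18) DType.l1 :=
  ⟨!![1, 0, 0; 0, -1, 0; 0, 0, -1], ![0, 1, 4], ⟨by decide, by decide⟩, by decide⟩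
lemma base_betaStrand_3 : HasType (window betaStrand 3) DType.r1 :=
  ⟨!![1, 0, 0; 0, 1, 0; 0, 0, 1], ![0, 0, 0], ⟨by decide, by decide⟩, by decide⟩
lemma base_betaStrand_4 : HasType (window betaStrand 4) DType.l1 :=
  ⟨!![-1, 0, 0; 0, 0, -1; 0, -1, 0], ![1, 1, 1], ⟨by decide, by decide⟩, by decide⟩
lemma base_betaStrand_5 : HasType (window betaStrand 5) DType.r1 :=
  ⟨!![-1, 0, 0; 0, 0, 1; 0, 1, 0], ![1, 0, -1], ⟨by decide, by decide⟩, by decide⟩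
lemma base_betaStrand_6 : HasType (window betaStrand 6) DType.l1 :=
  ⟨!![1, 0, 0; 0, -1, 0; 0, 0, -1], ![0, 2, 1], ⟨by decide, by decide⟩, by decide⟩


lemma alpha_type : ∀ i, 3 ≤ i → HasType (window alphaHelix i) (alphaPattern (i-3)) := by
  intro i
  induction i using Nat.strong_induction_on with
  | _ i ih =>
    intro hi
    by_cases h : i ≤ 18
    · interval_cases i
      · exact base_alphaHelix_3
      · exact base_alphaHelix_4
      · exact base_alphaHelix_5
      · exact base_alphaHelix_6
      · exact base_alphaHelix_7
      · exact base_alphaHelix_8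
      · exact base_alphaHelix_9
      · exact base_alphaHelix_10
      · exact base_alphaHelix_11
      · exact base_alphaHelix_12
      · exact base_alphaHelix_13
      · exact base_alphaHelix_14
      · exact base_alphaHelix_15
      · exact base_alphaHelix_16
      · exact base_alphaHelix_17
      · exact base_alphaHelix_18
    · obtain ⟨j, rfl⟩ : ∃ j, i = j + 16 := ⟨i-16, by omega⟩
      have hj : 3 ≤ j := by omega
      have hT := ih j (by omega) hj
      rw [window_alpha_shift j hj,
        show alphaPattern (j + 16 - 3) = alphaPattern (j - 3) from by
          unfold alphaPattern; rw [show (j+16-3)%4 = (j-3)%4 from by omega]]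
      exact HasType_translate _ hT

lemma beta_type : ∀ i, 3 ≤ i → HasType (window betaStrand i) (betaPattern (i-3)) := by
  intro i
  induction i using Nat.strong_induction_on with
  | _ i ih =>
    intro hi
    by_cases h : i ≤ 6
    · interval_cases i
      · exact base_betaStrand_3
      · exact base_betaStrand_4
      · exact base_betaStrand_5
      · exact base_betaStrand_6
    · obtain ⟨j, rfl⟩ : ∃ j, i = j + 4 := ⟨i-4, by omega⟩
      have hj : 3 ≤ j := by omega
      have hT := ih j (by omega) hj
      rw [window_beta_shift j hj,
        show betaPattern (j + 4 - 3) = betaPattern (j - 3) from by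
          unfold betaPattern; rw [show (j+4-3)%2 = (j-3)%2 from by omega]]
      exact HasType_translate _ hT

/-- the type sequence of the lattice α-helix of length `N ≥ 5`
is the 4-periodic word →1, →2, ←2, ←1, …, and the type sequence of the lattice
β-strand is the 2-periodic word →1, ←1, …. -/
theorem helix_strand_type_sequences (N : ℕ) (hN : 5 ≤ N) :
    ∀ i, 3 ≤ i → i ≤ N - 2 →
      HasType (window alphaHelix i) (alphaPattern (i - 3)) ∧
        HasType (window betaStrand i) (betaPattern (i - 3)) := by
  intro i h1 h2
  exact ⟨alpha_type i h1, beta_type i h1⟩
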